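/- arXiv:math/0109043 — 5 statements merged into one kernel-verified Lean document; each statement's English description precedes it below -/
import Mathlib

section
/- (First-column determination, injectivity.) Let m, n ≥ 2 be integers. If u and v are harmonic functions on the m×n rectangular grid that agree along the first column, i.e. u(0, j) = v(0, j) for all 0 ≤ j ≤ n−1, then u = v. Equivalently, the 𝔽₂-linear map sending a harmonic function to its restriction to the column x = 0 is injective. -/
/-- Membership in the m×n rectangular grid {0,…,m−1}×{0,…,n−1}. -/
def InGrid (m n i j : ℤ) : Prop :=
  0 ≤ i ∧ i ≤ m - 1 ∧ 0 ≤ j ∧ j ≤ n - 1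


instance (m n i j : ℤ) : Decidable (InGrid m n i j) :=
  inferInstanceAs (Decidable (_ ∧ _ ∧ _ ∧ _))

/-- A function on ℤ×ℤ with values in ZMod 2, vanishing outside the m×n grid,
is harmonic if the sum of its values at the four neighbours of any grid point is 0. -/
def IsHarmonic (m n : ℤ) (v : ℤ → ℤ → ZMod 2) : Prop :=
  (∀ i j : ℤ, ¬ InGrid m n i j → v i j = 0) ∧
  (∀ i j : ℤ, InGrid m n i j →
    v (i - 1) j + v (i + 1) j + v i (j - 1) + v i (j + 1) = 0)

/-- The 𝔽₂-vector space of harmonic functions on the m×n grid. -/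
def harm (m n : ℤ) : Submodule (ZMod 2) (ℤ → ℤ → ZMod 2) where
  carrier := {v | IsHarmonic m n v}
  zero_mem' := ⟨fun _ _ _ => rfl, fun _ _ _ => by simp⟩
  add_mem' := by
    rintro a b ⟨ha0, ha1⟩ ⟨hb0, hb1⟩
    refine ⟨fun i j h => ?_, fun i j h => ?_⟩
    · simp [Pi.add_apply, ha0 i j h, hb0 i j h]
    · have h1 := ha1 i j h
      have h2 := hb1 i j h
      simp only [Pi.add_apply]
      linear_combination h1 + h2
  smul_mem' := by
    rintro c a ⟨ha0, ha1⟩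
    refine ⟨fun i j h => ?_, fun i j h => ?_⟩
    · simp [Pi.smul_apply, ha0 i j h]
    · have h1 := ha1 i j h
      simp only [Pi.smul_apply, smul_eq_mul]
      linear_combination c * h1

/-- Functions vanishing on a prescribed set of points. -/
def vanishOn (P : ℤ → ℤ → Prop) : Submodule (ZMod 2) (ℤ → ℤ → ZMod 2) where
  carrier := {v | ∀ i j : ℤ, P i j → v i j = 0}
  zero_mem' := fun _ _ _ => rfl
  add_mem' := by
    intro a b ha hb i j h
    simp [Pi.add_apply, ha i j h, hb i j h]
  smul_mem' := by
    intro c a ha i j h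
    simp [Pi.smul_apply, ha i j h]

/-- The polarized kernel ker BW: harmonic functions vanishing at white points
(points with i+j odd). -/
def kerBW (m n : ℤ) : Submodule (ZMod 2) (ℤ → ℤ → ZMod 2) :=
  harm m n ⊓ vanishOn (fun i j => Odd (i + j))

/-- The polarized kernel ker WB: harmonic functions vanishing at black points
(points with i+j even). -/
def kerWB (m n : ℤ) : Submodule (ZMod 2) (ℤ → ℤ → ZMod 2) :=
  harm m n ⊓ vanishOn (fun i j => Even (i + j))

/-!
The difference of two harmonic functions is harmonic, so it suffices to show that a harmonic `w`
vanishing on column `0` is zero. Column `-1` lies outside the grid, so `w` vanishes there too, and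
the harmonic relation at `(i, j)` expresses `w (i + 1) j` through columns `i - 1` and `i`; hence
the columns vanish one after another.
-/

namespace IsHarmonic

variable {m n : ℤ} {w : ℤ → ℤ → ZMod 2}

theorem apply_succ_eq_zero (hw : IsHarmonic m n w) {i : ℤ} (hi : 0 ≤ i)
    (hprev : ∀ j, w (i - 1) j = 0) (hcur : ∀ j, w i j = 0) (j : ℤ) : w (i + 1) j = 0 := by
  by_cases hg : InGrid m n i j
  · have hsum := hw.2 i j hg
    rw [hprev, hcur, hcur] at hsum
    linear_combination hsum
  · exact hw.1 _ _ fun ⟨_, hi', hj⟩ => hg ⟨hi, by omega, hj⟩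

theorem eq_zero_of_forall_apply_zero_eq_zero (hw : IsHarmonic m n w)
    (h0 : ∀ j, w 0 j = 0) : w = 0 := by
  have hcols : ∀ k : ℕ, (∀ j, w ((k : ℤ) - 1) j = 0) ∧ ∀ j, w k j = 0 := by
    intro k
    induction k with
    | zero => exact ⟨fun j => hw.1 _ _ fun ⟨h, _⟩ => by omega, h0⟩
    | succ k ih =>
      refine ⟨by simpa using ih.2, fun j => ?_⟩
      exact_mod_cast hw.apply_succ_eq_zero (Int.natCast_nonneg k) ih.1 ih.2 j
  funext i j
  rcases lt_or_ge i 0 with hneg | hnonneg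
  · exact hw.1 _ _ fun ⟨h, _⟩ => by omega
  · lift i to ℕ using hnonneg
    exact (hcols i).2 j

end IsHarmonic

theorem first_column_determines_general (m n : ℤ)
    (u v : ℤ → ℤ → ZMod 2) (hu : IsHarmonic m n u) (hv : IsHarmonic m n v)
    (h : ∀ j : ℤ, 0 ≤ j → j ≤ n - 1 → u 0 j = v 0 j) : u = v := by
  have hw : IsHarmonic m n (u - v) := sub_mem (show u ∈ harm m n from hu) hv
  refine sub_eq_zero.mp (hw.eq_zero_of_forall_apply_zero_eq_zero fun j => ?_)
  by_cases hj : 0 ≤ j ∧ j ≤ n - 1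
  · simp [h j hj.1 hj.2]
  · exact hw.1 0 j fun hg => hj ⟨hg.2.2.1, hg.2.2.2⟩

/-- a harmonic function is determined by its values on the
first column x = 0. -/
theorem first_column_determines (m n : ℤ) (hm : 2 ≤ m) (hn : 2 ≤ n)
    (u v : ℤ → ℤ → ZMod 2) (hu : IsHarmonic m n u) (hv : IsHarmonic m n v)
    (h : ∀ j : ℤ, 0 ≤ j → j ≤ n - 1 → u 0 j = v 0 j) : u = v :=
  first_column_determines_general m n u v hu hv h
end

section
/- (First-column determination, surjectivity for squares.) Let n ≥ 1 be an integer. For every choice of values a : {0,…,n−1} → ZMod 2 there exists a (necessarily unique) harmonic function v on the n×n square grid with v(0, j) = a(j) for all 0 ≤ j ≤ n−1. In particular, the 𝔽₂-dimension of the space of harmonic functions on the n×n square grid equals n. -/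
/-!
Uniqueness: the harmonic equation at `(i, j)` expresses `v (i + 1) j` through the columns `i - 1`
and `i`, and column `-1` vanishes.

Existence is a method of images. Let `A` be the `(2n + 2)`-periodic extension of `a` by zero from
`[0, n)`, and `b t = A t + A (-2 - t)`, so `b` is symmetric about `-1` and about `n`. The function
`W i j = ∑_{k=0}^{i} b (j + i - 2k)` satisfies the harmonic equation on `ℕ × ℤ`, with `W (-1) = 0`
and `W 0 = b`. The symmetries of `b` make `W` vanish on the lines `j = -1` and `j = n`. On the
line `i = n`, the part of `W n j` coming from `A` is the sum of `A` over the parity class of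
`j + n` modulo `2n + 2`, so it is the same at `j` and `-2 - j`, and the two halves cancel.
So `W` restricted to the grid is harmonic.
-/

open Finset Function

section Grid

variable {m n : ℤ}

theorem IsHarmonic.eq_zero_of_first_column_eq_zero {v : ℤ → ℤ → ZMod 2}
    (hv : IsHarmonic m n v) (h₀ : ∀ j, v 0 j = 0) : v = 0 := by
  have columns : ∀ i, 0 ≤ i → v (i - 1) = 0 ∧ v i = 0 := by
    refine Int.leInduction ⟨funext fun j => hv.1 _ _ (by simp [InGrid]), funext h₀⟩ ?_
    rintro i hi ⟨hprev, hcur⟩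
    refine ⟨by simpa using hcur, funext fun j => ?_⟩
    by_cases hij : InGrid m n i j
    · simpa [hprev, hcur] using hv.2 i j hij
    · exact hv.1 _ _ fun h => hij (by unfold InGrid at *; omega)
  funext i j
  by_cases hi : 0 ≤ i
  · exact congrFun (columns i hi).2 j
  · exact hv.1 i j fun h => hi h.1

def gridRestrict (m n : ℤ) (W : ℤ → ℤ → ZMod 2) (i j : ℤ) : ZMod 2 :=
  if InGrid m n i j then W i j else 0

theorem isHarmonic_gridRestrict {W : ℤ → ℤ → ZMod 2}
    (hW : ∀ i j, InGrid m n i j → W (i - 1) j + W (i + 1) j + W i (j - 1) + W i (j + 1) = 0)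
    (h_left : ∀ j, W (-1) j = 0) (h_right : ∀ j, W m j = 0)
    (h_bot : ∀ i, W i (-1) = 0) (h_top : ∀ i, W i n = 0) :
    IsHarmonic m n (gridRestrict m n W) := by
  have h_closure : ∀ i j, -1 ≤ i → i ≤ m → -1 ≤ j → j ≤ n → gridRestrict m n W i j = W i j := by
    intro i j hi₀ hi₁ hj₀ hj₁
    by_cases hij : InGrid m n i j
    · exact if_pos hij
    rw [gridRestrict, if_neg hij]
    unfold InGrid at hij
    obtain rfl | rfl | rfl | rfl : i = -1 ∨ i = m ∨ j = -1 ∨ j = n := by omega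
    exacts [(h_left j).symm, (h_right j).symm, (h_bot i).symm, (h_top i).symm]
  refine ⟨fun i j hij => if_neg hij, fun i j hij => ?_⟩
  have ⟨hi₀, hi₁, hj₀, hj₁⟩ := hij
  rw [h_closure (i - 1) j, h_closure (i + 1) j, h_closure i (j - 1), h_closure i (j + 1)] <;>
    try omega
  exact hW i j hij

end Grid

section ConeSum

variable {M : Type*} [AddCommMonoid M]

/-- Over `𝔽₂`, the solution of the harmonic recurrence on `ℕ × ℤ` with column `-1` zero and
column `0` equal to `f`. -/
noncomputable def coneSum (f : ℤ → M) (i j : ℤ) : M :=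
  ∑ k ∈ Icc 0 i, f (j + i - 2 * k)

def symmetrize (f : ℤ → M) (t : ℤ) : M :=
  f t + f (-2 - t)

variable (f : ℤ → M)

@[simp]
theorem coneSum_neg_one (j : ℤ) : coneSum f (-1) j = 0 := by
  simp [coneSum]

@[simp]
theorem coneSum_zero (j : ℤ) : coneSum f 0 j = f j := by
  simp [coneSum]

theorem coneSum_add_one {i : ℤ} (hi : -1 ≤ i) (j : ℤ) :
    coneSum f (i + 1) j = coneSum f i (j + 1) + f (j - i - 1) := by
  rw [coneSum, ← insert_Icc_right_eq_Icc_add_one (by omega), sum_insert (by simp), add_comm]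
  congr 1
  · exact sum_congr rfl fun k _ => congrArg f (by ring)
  · exact congrArg f (by ring)

theorem coneSum_add_one' {i : ℤ} (hi : -1 ≤ i) (j : ℤ) :
    coneSum f (i + 1) j = f (j + i + 1) + coneSum f i (j - 1) := by
  rw [coneSum, ← insert_Icc_add_one_left_eq_Icc (by omega), sum_insert (by simp)]
  congr 1
  · exact congrArg f (by ring)
  · exact sum_nbij' (· - 1) (· + 1) (by simp) (by simp) (by simp) (by simp)
      fun k _ => congrArg f (by ring)

theorem coneSum_comp_neg_two_sub (i j : ℤ) :
    coneSum (fun t => f (-2 - t)) i j = coneSum f i (-2 - j) :=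
  sum_nbij' (i - ·) (i - ·) (by simp; omega) (by simp; omega) (by simp) (by simp)
    fun k _ => congrArg f (by ring)

theorem coneSum_symmetrize (i j : ℤ) :
    coneSum (symmetrize f) i j = coneSum f i j + coneSum f i (-2 - j) := by
  rw [← coneSum_comp_neg_two_sub]
  exact sum_add_distrib

theorem periodic_coneSum {c : ℤ} (hf : Periodic f c) (i : ℤ) : Periodic (coneSum f i) c :=
  fun j => sum_congr rfl fun k _ => (congrArg f (by ring)).trans (hf _)

end ConeSum

/-- Column `i` of `coneSum f` adds up `f` over a full parity class modulo `2 * i + 2`. -/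
theorem periodic_coneSum_two {M : Type*} [AddCancelCommMonoid M] {f : ℤ → M} {i : ℤ}
    (hf : Periodic f (2 * i + 2)) (hi : -1 ≤ i) : Periodic (coneSum f i) 2 := fun j => by
  refine add_right_cancel (b := f (j - i)) ?_
  calc coneSum f i (j + 2) + f (j - i)
      = coneSum f (i + 1) (j + 1) := by rw [coneSum_add_one f hi]; congr 2 <;> ring
    _ = f (j - i + (2 * i + 2)) + coneSum f i j := by
      rw [coneSum_add_one' f hi]; congr 2 <;> ring
    _ = coneSum f i j + f (j - i) := by rw [hf, add_comm]

theorem coneSum_laplacian_eq_zero (f : ℤ → ZMod 2) {i : ℤ} (hi : 0 ≤ i) (j : ℤ) :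
    coneSum f (i - 1) j + coneSum f (i + 1) j + coneSum f i (j - 1) + coneSum f i (j + 1) = 0 := by
  have h := coneSum_add_one f (i := i - 1) (by omega) (j - 1)
  rw [sub_add_cancel, sub_add_cancel, show j - 1 - (i - 1) - 1 = j - i - 1 by ring] at h
  rw [coneSum_add_one f (by omega), h]
  ring_nf
  reduce_mod_char

section Symmetrize

variable {n : ℤ} {f : ℤ → ZMod 2}

theorem coneSum_symmetrize_row_neg_one (i : ℤ) : coneSum (symmetrize f) i (-1) = 0 := by
  rw [coneSum_symmetrize, show (-2 - -1 : ℤ) = -1 by norm_num]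
  exact CharTwo.add_self_eq_zero _

theorem coneSum_symmetrize_row_eq_zero (hf : Periodic f (2 * n + 2)) (i : ℤ) :
    coneSum (symmetrize f) i n = 0 := by
  rw [coneSum_symmetrize, show -2 - n = n - (2 * n + 2) by ring,
    (periodic_coneSum f hf i).sub_eq]
  exact CharTwo.add_self_eq_zero _

theorem coneSum_symmetrize_column_eq_zero (hf : Periodic f (2 * n + 2)) (hn : 0 ≤ n) (j : ℤ) :
    coneSum (symmetrize f) n j = 0 := by
  rw [coneSum_symmetrize, show -2 - j = j + (-1 - j) • 2 by rw [smul_eq_mul]; ring,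
    (periodic_coneSum_two hf (by omega)).zsmul (-1 - j) j]
  exact CharTwo.add_self_eq_zero _

theorem isHarmonic_gridRestrict_coneSum_symmetrize (hf : Periodic f (2 * n + 2)) (hn : 0 ≤ n) :
    IsHarmonic n n (gridRestrict n n (coneSum (symmetrize f))) :=
  isHarmonic_gridRestrict (fun _ _ hij => coneSum_laplacian_eq_zero _ hij.1 _)
    (coneSum_neg_one _) (coneSum_symmetrize_column_eq_zero hf hn)
    coneSum_symmetrize_row_neg_one (coneSum_symmetrize_row_eq_zero hf)

end Symmetrize

section PeriodicExt

variable {M : Type*} [Zero M]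

def periodicExt (n : ℤ) (a : ℤ → M) (t : ℤ) : M :=
  if t % (2 * n + 2) < n then a (t % (2 * n + 2)) else 0

variable {n : ℤ} (a : ℤ → M)

theorem periodic_periodicExt : Periodic (periodicExt n a) (2 * n + 2) := fun t => by
  simp [periodicExt]

theorem periodicExt_of_lt {t : ℤ} (ht₀ : 0 ≤ t) (ht : t < n) : periodicExt n a t = a t := by
  rw [periodicExt, Int.emod_eq_of_lt ht₀ (by omega), if_pos ht]

theorem periodicExt_neg_two_sub {t : ℤ} (ht₀ : 0 ≤ t) (ht : t < n) :
    periodicExt n a (-2 - t) = 0 := by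
  have : (-2 - t) % (2 * n + 2) = 2 * n - t := by
    rw [show -2 - t = 2 * n - t + (2 * n + 2) * (-1) by ring, Int.add_mul_emod_self_left,
      Int.emod_eq_of_lt (by omega) (by omega)]
  rw [periodicExt, this, if_neg (by omega)]

end PeriodicExt

theorem exists_isHarmonic_first_column_eq {n : ℤ} (hn : 0 ≤ n) (a : ℤ → ZMod 2) :
    ∃ v, IsHarmonic n n v ∧ ∀ j, 0 ≤ j → j ≤ n - 1 → v 0 j = a j := by
  refine ⟨_, isHarmonic_gridRestrict_coneSum_symmetrize (periodic_periodicExt a) hn,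
    fun j hj₀ hj₁ => ?_⟩
  rw [gridRestrict, if_pos ⟨le_rfl, by omega, hj₀, hj₁⟩, coneSum_zero, symmetrize,
    periodicExt_of_lt a hj₀ (by omega), periodicExt_neg_two_sub a hj₀ (by omega), add_zero]

def firstColumn (n : ℕ) : harm n n →ₗ[ZMod 2] (Fin n → ZMod 2) where
  toFun v j := v.1 0 j
  map_add' _ _ := rfl
  map_smul' _ _ := rfl

theorem firstColumn_injective (n : ℕ) : Injective (firstColumn n) := by
  refine (injective_iff_map_eq_zero _).mpr fun v hv => Subtype.ext ?_
  refine v.2.eq_zero_of_first_column_eq_zero fun j => ?_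
  by_cases hj : 0 ≤ j ∧ j < n
  · simpa [firstColumn, Int.toNat_of_nonneg hj.1] using congrFun hv ⟨j.toNat, by omega⟩
  · exact v.2.1 0 j fun h => hj ⟨h.2.2.1, by linarith [h.2.2.2]⟩

theorem firstColumn_surjective (n : ℕ) : Surjective (firstColumn n) := by
  intro w
  obtain ⟨v, hv, hv₀⟩ := exists_isHarmonic_first_column_eq (Nat.cast_nonneg n)
    fun t => if h : 0 ≤ t ∧ t < n then w ⟨t.toNat, by omega⟩ else 0
  refine ⟨⟨v, hv⟩, funext fun j => ?_⟩
  simp [firstColumn, hv₀ j (Nat.cast_nonneg _) (by omega)]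

theorem first_column_surjective_square_general (n : ℕ) :
    (∀ a : ℤ → ZMod 2, ∃ v : ℤ → ℤ → ZMod 2,
      IsHarmonic (n : ℤ) (n : ℤ) v ∧
        ∀ j : ℤ, 0 ≤ j → j ≤ (n : ℤ) - 1 → v 0 j = a j) ∧
    Module.finrank (ZMod 2) (harm (n : ℤ) (n : ℤ)) = n := by
  refine ⟨exists_isHarmonic_first_column_eq (Nat.cast_nonneg n), ?_⟩
  rw [(LinearEquiv.ofBijective _ ⟨firstColumn_injective n, firstColumn_surjective n⟩).finrank_eq]
  simp

/-- on the n×n square grid, any choice of values along the first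
column extends to a harmonic function; in particular the space of harmonic
functions has 𝔽₂-dimension n. -/
theorem first_column_surjective_square (n : ℕ) (hn : 1 ≤ n) :
    (∀ a : ℤ → ZMod 2, ∃ v : ℤ → ℤ → ZMod 2,
      IsHarmonic (n : ℤ) (n : ℤ) v ∧
        ∀ j : ℤ, 0 ≤ j → j ≤ (n : ℤ) - 1 → v 0 j = a j) ∧
    Module.finrank (ZMod 2) (harm (n : ℤ) (n : ℤ)) = n :=
  first_column_surjective_square_general n
end

section
/- (Kernel decomposition by color.) Let m, n ≥ 2 and let v be a harmonic function on the m×n rectangular grid. Then the function v_b defined by v_b(i,j) = v(i,j) if i+j is even and v_b(i,j) = 0 if i+j is odd is again harmonic, and likewise the function v_w = v − v_b supported on points with i+j odd is harmonic. Consequently the space of harmonic functions is the internal direct sum of the polarized kernels ker BW and ker WB. -/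
/-! Every neighbour of a grid point has the opposite colour, so the harmonicity equation at a point
only involves values at points of the other colour. Erasing the white values therefore makes the
equations at black points read `0 = 0` and leaves those at white points unchanged; since every
function is the sum of its black and white parts and no nonzero function vanishes at both colours,
the harmonic functions split as `ker BW ⊕ ker WB`. -/

theorem mem_harm {m n : ℤ} {v : ℤ → ℤ → ZMod 2} : v ∈ harm m n ↔ IsHarmonic m n v :=
  Iff.rfl

theorem vanishOn_inf_vanishOn_eq_bot {P Q : ℤ → ℤ → Prop} (hPQ : ∀ i j, P i j ∨ Q i j) :
    vanishOn P ⊓ vanishOn Q = ⊥ := by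
  refine eq_bot_iff.2 fun v ⟨hP, hQ⟩ => (Submodule.mem_bot _).2 ?_
  funext i j
  exact (hPQ i j).elim (hP i j) (hQ i j)

def blackPart (v : ℤ → ℤ → ZMod 2) : ℤ → ℤ → ZMod 2 :=
  fun i j => if Even (i + j) then v i j else 0

theorem blackPart_mem_vanishOn_odd (v : ℤ → ℤ → ZMod 2) :
    blackPart v ∈ vanishOn fun i j => Odd (i + j) :=
  fun _ _ hij => if_neg (Int.not_even_iff_odd.2 hij)

theorem sub_blackPart_mem_vanishOn_even (v : ℤ → ℤ → ZMod 2) :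
    v - blackPart v ∈ vanishOn fun i j => Even (i + j) :=
  fun _ _ hij => by simp [blackPart, hij]

namespace IsHarmonic

variable {m n : ℤ} {v : ℤ → ℤ → ZMod 2}

theorem blackPart (hv : IsHarmonic m n v) : IsHarmonic m n (blackPart v) := by
  refine ⟨fun i j h => by simp [_root_.blackPart, hv.1 i j h], fun i j h => ?_⟩
  -- all four neighbours have the parity of `i + j ± 1`
  simp only [_root_.blackPart, sub_add_eq_add_sub, add_right_comm i 1 j, ← add_assoc,
    ← add_sub_assoc, Int.even_sub_one, Int.even_add_one]
  by_cases hij : Even (i + j)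
  · simp [hij]
  · simpa [hij] using hv.2 i j h

theorem sub_blackPart (hv : IsHarmonic m n v) : IsHarmonic m n (v - _root_.blackPart v) :=
  sub_mem (mem_harm.2 hv) (mem_harm.2 hv.blackPart)

end IsHarmonic

variable {m n : ℤ}

theorem blackPart_mem_kerBW {v : ℤ → ℤ → ZMod 2} (hv : IsHarmonic m n v) :
    blackPart v ∈ kerBW m n :=
  ⟨hv.blackPart, blackPart_mem_vanishOn_odd v⟩

theorem sub_blackPart_mem_kerWB {v : ℤ → ℤ → ZMod 2} (hv : IsHarmonic m n v) :
    v - blackPart v ∈ kerWB m n :=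
  ⟨hv.sub_blackPart, sub_blackPart_mem_vanishOn_even v⟩

theorem kerBW_sup_kerWB : kerBW m n ⊔ kerWB m n = harm m n := by
  refine le_antisymm (sup_le inf_le_left inf_le_left) fun v hv => ?_
  rw [← add_sub_cancel (blackPart v) v]
  exact Submodule.add_mem_sup (blackPart_mem_kerBW hv) (sub_blackPart_mem_kerWB hv)

theorem kerBW_inf_kerWB : kerBW m n ⊓ kerWB m n = ⊥ :=
  eq_bot_iff.2 <| (inf_le_inf inf_le_right inf_le_right).trans <|
    (vanishOn_inf_vanishOn_eq_bot fun i j => (Int.even_or_odd (i + j)).symm).le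

theorem kernel_color_decomposition_general (m n : ℤ)
    (v : ℤ → ℤ → ZMod 2) (hv : IsHarmonic m n v) :
    IsHarmonic m n (fun i j => if Even (i + j) then v i j else 0) ∧
    IsHarmonic m n (fun i j => v i j - if Even (i + j) then v i j else 0) ∧
    kerBW m n ⊔ kerWB m n = harm m n ∧
    kerBW m n ⊓ kerWB m n = ⊥ :=
  ⟨hv.blackPart, hv.sub_blackPart, kerBW_sup_kerWB, kerBW_inf_kerWB⟩

/-- the black and white parts of a harmonic function are harmonic,
and the space of harmonic functions is the internal direct sum of ker BW and
ker WB. -/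
theorem kernel_color_decomposition (m n : ℤ) (hm : 2 ≤ m) (hn : 2 ≤ n)
    (v : ℤ → ℤ → ZMod 2) (hv : IsHarmonic m n v) :
    IsHarmonic m n (fun i j => if Even (i + j) then v i j else 0) ∧
    IsHarmonic m n (fun i j => v i j - if Even (i + j) then v i j else 0) ∧
    kerBW m n ⊔ kerWB m n = harm m n ∧
    kerBW m n ⊓ kerWB m n = ⊥ :=
  kernel_color_decomposition_general m n v hv
end

section
/- (Zero column at x = n, from the proof of Theorem 3.) Let m > n ≥ 2 be integers and let v be a harmonic function on the m×n rectangular grid. Then v vanishes along the column x = n: v(n, j) = 0 for all 0 ≤ j ≤ n−1. Moreover, if m − n − 1 ≥ 1, the translated restriction w(i,j) = v(n+1+i, j) (0 ≤ i ≤ m−n−2, 0 ≤ j ≤ n−1), extended by 0, is a harmonic function on the (m−n−1)×n rectangular grid. -/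
/-!
Over `ZMod 2` harmonicity says, column by column, `v (k + 1) = T (v k) - v (k - 1)` with
`v (-1) = 0`, where `T` is the adjacency operator of the path `0 — 1 — ⋯ — (n - 1)`. This is the
recurrence of the Chebyshev polynomials `S k`, so `v k = S k (T) (v 0)`. Now `S k (T)` sends the
basis vector `e₀` to `e_k` for `k ≤ n`, hence `S n (T) e₀ = e_n = 0`; as the `S k (T)` commute and
the `e_l = S l (T) e₀` span, `S n (T) = 0` (Cayley–Hamilton for the path, whose characteristic
polynomial is `S n`). So column `n` vanishes, and the columns beyond it are harmonic on their own.
-/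

open Polynomial Polynomial.Chebyshev

theorem eq_aeval_S_apply_of_recurrence {R M : Type*} [CommRing R] [AddCommGroup M] [Module R M]
    (T : Module.End R M) {N : ℤ} {x : ℤ → M} (h_neg_one : x (-1) = 0)
    (hrec : ∀ i, -1 ≤ i → i + 2 ≤ N → x (i + 2) = T (x (i + 1)) - x i) {k : ℤ} (hk : -1 ≤ k)
    (hkN : k ≤ N) : x k = aeval T (S R k) (x 0) := by
  set c : ℤ → Prop := fun k => x k = aeval T (S R k) (x 0)
  suffices h : ∀ i, -1 ≤ i → (i ≤ N → c i) ∧ (i + 1 ≤ N → c (i + 1)) from (h k hk).1 hkN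
  intro i hi
  induction i, hi using Int.leInduction with
  | base => exact ⟨fun _ => by simp [c, h_neg_one, S_neg_one], fun _ => by simp [c, S_zero]⟩
  | succ i hi ih =>
    refine ⟨ih.2, fun hiN => ?_⟩
    simp only [c]
    rw [add_assoc, one_add_one_eq_two, hrec i hi (by omega), ih.2 (by omega), ih.1 (by omega),
      S_add_two, map_sub, map_mul, aeval_X, LinearMap.sub_apply, Module.End.mul_apply]

def pathAdj (n : ℤ) : Module.End (ZMod 2) (ℤ → ZMod 2) where
  toFun f j := if 0 ≤ j ∧ j ≤ n - 1 then f (j - 1) + f (j + 1) else 0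
  map_add' f g := by
    funext j
    simp only [Pi.add_apply]
    split_ifs <;> ring
  map_smul' c f := by
    funext j
    simp only [Pi.smul_apply, smul_eq_mul, RingHom.id_apply]
    split_ifs <;> ring

/-- The `e_l` of the header; it is `0` unless `0 ≤ l ≤ n - 1`, so that `e_{-1} = e_n = 0`. -/
def pathSingle (n l : ℤ) : ℤ → ZMod 2 := fun j => if j = l ∧ 0 ≤ l ∧ l ≤ n - 1 then 1 else 0

lemma pathAdj_pathSingle {n l : ℤ} (hl₀ : 0 ≤ l) (hl : l ≤ n - 1) :
    pathAdj n (pathSingle n l) = pathSingle n (l - 1) + pathSingle n (l + 1) := by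
  funext j
  simp only [pathAdj, pathSingle, LinearMap.coe_mk, AddHom.coe_mk, Pi.add_apply]
  split_ifs <;> first | decide | omega

lemma aeval_S_pathAdj_pathSingle_zero {n k : ℤ} (hk : -1 ≤ k) (hkn : k ≤ n) :
    aeval (pathAdj n) (S (ZMod 2) k) (pathSingle n 0) = pathSingle n k := by
  refine (eq_aeval_S_apply_of_recurrence _ ?_ (fun i hi hin => ?_) hk hkn).symm
  · funext j
    simp [pathSingle]
  · rw [pathAdj_pathSingle (by omega) (by omega), add_sub_cancel_right, add_sub_cancel_left,
      add_assoc, one_add_one_eq_two]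

lemma pathSingle_self (n : ℤ) : pathSingle n n = 0 := by
  funext j
  simp [pathSingle]

lemma sum_smul_pathSingle {n : ℤ} {f : ℤ → ZMod 2}
    (hf : ∀ j, ¬(0 ≤ j ∧ j ≤ n - 1) → f j = 0) :
    ∑ l ∈ Finset.Icc 0 (n - 1), f l • pathSingle n l = f := by
  funext j
  simp only [Finset.sum_apply, Pi.smul_apply, smul_eq_mul, pathSingle, mul_ite, mul_one, mul_zero]
  by_cases hj : 0 ≤ j ∧ j ≤ n - 1
  · rw [Finset.sum_eq_single_of_mem j (Finset.mem_Icc.2 hj)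
      fun l _ hlj => if_neg fun h => hlj h.1.symm, if_pos ⟨rfl, hj⟩]
  · rw [hf j hj]
    exact Finset.sum_eq_zero fun l _ => if_neg fun h : j = l ∧ _ => hj (h.1 ▸ h.2)

lemma aeval_S_pathAdj_eq_zero {n : ℤ} (hn : 0 ≤ n) {f : ℤ → ZMod 2}
    (hf : ∀ j, ¬(0 ≤ j ∧ j ≤ n - 1) → f j = 0) : aeval (pathAdj n) (S (ZMod 2) n) f = 0 := by
  rw [← sum_smul_pathSingle hf, map_sum]
  refine Finset.sum_eq_zero fun l hl => ?_
  rw [Finset.mem_Icc] at hl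
  rw [map_smul, ← aeval_S_pathAdj_pathSingle_zero (n := n) (k := l) (by omega) (by omega),
    ← Module.End.mul_apply, ← map_mul, mul_comm, map_mul, Module.End.mul_apply,
    aeval_S_pathAdj_pathSingle_zero (by omega) le_rfl, pathSingle_self, map_zero, smul_zero]

namespace IsHarmonic

variable {m n : ℤ} {v : ℤ → ℤ → ZMod 2}

lemma column_add_two (hv : IsHarmonic m n v) {i : ℤ} (hi : -1 ≤ i) (him : i + 2 ≤ m) :
    v (i + 2) = pathAdj n (v (i + 1)) - v i := by
  funext j
  simp only [pathAdj, LinearMap.coe_mk, AddHom.coe_mk, Pi.sub_apply]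
  split_ifs with hj
  · have h := hv.2 (i + 1) j ⟨by omega, by omega, hj.1, hj.2⟩
    rw [add_sub_cancel_right, add_assoc i 1 1, one_add_one_eq_two] at h
    grind
  · rw [hv.1 _ _ (by unfold InGrid; omega), hv.1 _ _ (by unfold InGrid; omega), sub_zero]

lemma column_eq_aeval (hv : IsHarmonic m n v) {k : ℤ} (hk : -1 ≤ k) (hkm : k ≤ m) :
    v k = aeval (pathAdj n) (S (ZMod 2) k) (v 0) :=
  eq_aeval_S_apply_of_recurrence _ (funext fun j => hv.1 _ _ (by unfold InGrid; omega))
    (fun _ hi him => hv.column_add_two hi him) hk hkm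

lemma column_width_eq_zero (hv : IsHarmonic m n v) (hn : 0 ≤ n) (hnm : n ≤ m) : v n = 0 := by
  rw [hv.column_eq_aeval (by omega) hnm]
  exact aeval_S_pathAdj_eq_zero hn fun j hj => hv.1 0 j (by unfold InGrid; omega)

lemma shift_of_column_eq_zero (hv : IsHarmonic m n v) {k : ℤ} (hk : 0 ≤ k) (hcol : v k = 0) :
    IsHarmonic (m - k - 1) n
      (fun i j => if InGrid (m - k - 1) n i j then v (k + 1 + i) j else 0) := by
  have hshift : ∀ i j, -1 ≤ i →
      (if InGrid (m - k - 1) n i j then v (k + 1 + i) j else 0) = v (k + 1 + i) j := by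
    intro i j hi
    split_ifs with h
    · rfl
    · obtain rfl | hi := eq_or_lt_of_le hi
      · simp [hcol]
      · exact (hv.1 _ _ (by unfold InGrid at h ⊢; omega)).symm
  refine ⟨fun i j h => if_neg h, fun i j hij => ?_⟩
  obtain ⟨hi, him, hj, hjn⟩ := hij
  dsimp only
  rw [hshift _ _ (by omega), hshift _ _ (by omega), hshift _ _ (by omega), hshift _ _ (by omega),
    show k + 1 + (i - 1) = k + 1 + i - 1 by ring, show k + 1 + (i + 1) = k + 1 + i + 1 by ring]
  exact hv.2 (k + 1 + i) j ⟨by omega, by omega, hj, hjn⟩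

end IsHarmonic

/-- for m > n, harmonic functions vanish on the column x = n, and
the translated restriction to the last m−n−1 columns is harmonic on the
(m−n−1)×n grid. -/
theorem zero_column_at_n (m n : ℤ) (hn : 2 ≤ n) (hmn : n < m)
    (v : ℤ → ℤ → ZMod 2) (hv : IsHarmonic m n v) :
    (∀ j : ℤ, 0 ≤ j → j ≤ n - 1 → v n j = 0) ∧
    (1 ≤ m - n - 1 →
      IsHarmonic (m - n - 1) n
        (fun i j => if InGrid (m - n - 1) n i j then v (n + 1 + i) j else 0)) := by
  have hcol : v n = 0 := hv.column_width_eq_zero (by omega) hmn.le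
  exact ⟨fun j _ _ => congrFun hcol j, fun _ => hv.shift_of_column_eq_zero (by omega) hcol⟩
end

section
/- (Triviality criterion.) Let m, n ≥ 2 be integers. The only harmonic function on the m×n rectangular grid is the zero function if and only if gcd(m+1, n+1) = 1. Equivalently, the adjacency matrix of the m×n rectangular grid graph is invertible over 𝔽₂ = ZMod 2 exactly when m+1 and n+1 are coprime. -/
/-!
Over `ZMod 2` odd and even reflection coincide, so reflecting a harmonic `v` across the lines
just outside the grid extends it to a function `W` on `ℤ × ℤ` that is harmonic everywhere and
has periods `2 (m + 1)` and `2 (n + 1)`. The diagonal increment `W (i + 1) (j + 1) - W i j` of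
such a `W` depends only on `i + j` and inherits both periods, so it has period
`2 gcd (m + 1) (n + 1)`. If this is `2`, then `W` grows linearly along each diagonal starting
from the zero line `i = -1`: `W i j = (i + 1) c (i + j)`. For `m` even (or, by symmetry, `n`
even) the zero line `i = m` forces `c = 0`, hence `W = 0`.

Conversely, if `d = gcd (m + 1) (n + 1) ≥ 2`, then `ψ (i + j + 2) + ψ (i - j)`, with `ψ` the
indicator of `2 d ℤ`, restricts to a nonzero harmonic function.
-/

open Function

section Fold

/-- The triangle wave of period `2 * M` that is the identity on `[-1, M - 1]`. -/
def foldInto (M i : ℤ) : ℤ :=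
  min ((i + 1) % (2 * M)) (2 * M - (i + 1) % (2 * M)) - 1

lemma Int.add_one_emod_cases {N : ℤ} (hN : 0 < N) (a : ℤ) :
    (a + 1) % N = a % N + 1 ∨ (a % N = N - 1 ∧ (a + 1) % N = 0) := by
  have := Int.emod_nonneg a hN.ne'
  have := Int.emod_lt_of_pos a hN
  rw [← Int.emod_add_emod]
  by_cases h : a % N = N - 1
  · rw [h, sub_add_cancel, Int.emod_self]
    exact .inr ⟨rfl, rfl⟩
  · exact .inl (Int.emod_eq_of_lt (by omega) (by omega))

lemma periodic_foldInto (M : ℤ) : Periodic (foldInto M) (2 * M) := by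
  intro i
  simp only [foldInto, add_right_comm i (2 * M), Int.add_emod_right]

variable {M : ℤ}

lemma foldInto_of_mem (hM : 0 < M) {i : ℤ} (hi : -1 ≤ i) (hiM : i ≤ M - 1) :
    foldInto M i = i := by
  rw [foldInto, Int.emod_eq_of_lt (by omega) (by omega)]
  omega

lemma foldInto_mem (hM : 0 < M) (i : ℤ) : -1 ≤ foldInto M i ∧ foldInto M i ≤ M - 1 := by
  have := Int.emod_nonneg (i + 1) (by omega : 2 * M ≠ 0)
  have := Int.emod_lt_of_pos (i + 1) (by omega : 0 < 2 * M)
  unfold foldInto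
  omega

lemma foldInto_neighbours (hM : 0 < M) (i : ℤ) :
    ((foldInto M i = -1 ∨ foldInto M i = M - 1) ∧ foldInto M (i - 1) = foldInto M (i + 1)) ∨
    (foldInto M (i - 1) = foldInto M i - 1 ∧ foldInto M (i + 1) = foldInto M i + 1) ∨
    (foldInto M (i - 1) = foldInto M i + 1 ∧ foldInto M (i + 1) = foldInto M i - 1) := by
  have hN : 0 < 2 * M := by omega
  have hpred := Int.add_one_emod_cases hN i
  have hsucc := Int.add_one_emod_cases hN (i + 1)
  have := Int.emod_nonneg (i + 1) hN.ne'
  have := Int.emod_lt_of_pos (i + 1) hN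
  have := Int.emod_nonneg i hN.ne'
  have := Int.emod_lt_of_pos i hN
  unfold foldInto
  rw [sub_add_cancel]
  omega

end Fold

section PlaneHarmonic

def IsPlaneHarmonic (W : ℤ → ℤ → ZMod 2) : Prop :=
  ∀ i j, W (i - 1) j + W (i + 1) j + W i (j - 1) + W i (j + 1) = 0

lemma isPlaneHarmonic_add_sub (f g : ℤ → ZMod 2) :
    IsPlaneHarmonic fun i j => f (i + j) + g (i - j) := by
  intro i j
  ring_nf
  reduce_mod_char

def diagIncrement (W : ℤ → ℤ → ZMod 2) (s : ℤ) : ZMod 2 :=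
  W s 0 + W (s + 1) 1

variable {W : ℤ → ℤ → ZMod 2}

lemma IsPlaneHarmonic.apply_add_one_add_one (hW : IsPlaneHarmonic W) (i j : ℤ) :
    W (i + 1) (j + 1) = W i j + diagIncrement W (i + j) := by
  have hstep : Periodic (fun k => W (i + k) (j - k) + W (i + k + 1) (j - k + 1)) 1 := by
    intro k
    linear_combination (norm := (ring_nf; reduce_mod_char)) hW (i + k + 1) (j - k)
  have := hstep.int_mul_eq j
  simp only [Int.cast_id, mul_one, add_zero, sub_zero, sub_self, zero_add] at this
  rw [diagIncrement, this]
  ring_nf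
  reduce_mod_char

lemma periodic_diagIncrement_of_left {p : ℤ} (hp : ∀ i j, W (i + p) j = W i j) :
    Periodic (diagIncrement W) p := by
  intro s
  simp only [diagIncrement, add_right_comm s p, hp]

lemma IsPlaneHarmonic.periodic_diagIncrement_of_right (hW : IsPlaneHarmonic W) {q : ℤ}
    (hq : ∀ i j, W i (j + q) = W i j) : Periodic (diagIncrement W) q := by
  intro s
  have h := hW.apply_add_one_add_one s q
  have h₀ := hq s 0
  have h₁ := hq (s + 1) 1
  rw [zero_add] at h₀
  rw [add_comm q 1, h₁, h₀] at h
  change diagIncrement W (s + q) = W s 0 + W (s + 1) 1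
  rw [h]
  ring_nf
  reduce_mod_char

/-- A diagonal meets antidiagonals of a single parity only, so all its increments are equal. -/
lemma IsPlaneHarmonic.apply_add_add (hW : IsPlaneHarmonic W)
    (h2 : Periodic (diagIncrement W) 2) (i j k : ℤ) :
    W (i + k) (j + k) = W i j + k * diagIncrement W (i + j) := by
  have hstep : Periodic (fun k : ℤ => W (i + k) (j + k) + k * diagIncrement W (i + j)) 1 := by
    intro k
    have hk := h2.int_mul k (i + j)
    rw [Int.cast_id] at hk
    simp only [← add_assoc, hW.apply_add_one_add_one, Int.cast_add, Int.cast_one]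
    rw [show i + k + j + k = i + j + k * 2 by ring, hk]
    ring_nf
    reduce_mod_char
  have := hstep.int_mul_eq k
  simp only [Int.cast_id, mul_one, add_zero, Int.cast_zero, zero_mul] at this
  linear_combination (norm := (ring_nf; reduce_mod_char)) this

end PlaneHarmonic

section Extension

variable {m n : ℤ} {v : ℤ → ℤ → ZMod 2}

lemma IsHarmonic.apply_eq_zero_of_left (hv : IsHarmonic m n v) {a : ℤ} (ha : a = -1 ∨ a = m)
    (b : ℤ) : v a b = 0 :=
  hv.1 a b fun h => by unfold InGrid at h; omega

lemma IsHarmonic.apply_eq_zero_of_right (hv : IsHarmonic m n v) (a : ℤ) {b : ℤ}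
    (hb : b = -1 ∨ b = n) : v a b = 0 :=
  hv.1 a b fun h => by unfold InGrid at h; omega

lemma IsHarmonic.swap (hv : IsHarmonic m n v) : IsHarmonic n m fun i j => v j i :=
  ⟨fun i j h => hv.1 j i fun h' => h (by unfold InGrid at *; omega),
    fun i j h => by linear_combination hv.2 j i (by unfold InGrid at *; omega)⟩

def reflectExtension (m n : ℤ) (v : ℤ → ℤ → ZMod 2) (i j : ℤ) : ZMod 2 :=
  v (foldInto (m + 1) i) (foldInto (n + 1) j)

lemma reflectExtension_of_mem (hm : 0 ≤ m) (hn : 0 ≤ n) {i j : ℤ} (hi : -1 ≤ i) (him : i ≤ m)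
    (hj : -1 ≤ j) (hjn : j ≤ n) : reflectExtension m n v i j = v i j := by
  rw [reflectExtension, foldInto_of_mem (by omega) hi (by omega),
    foldInto_of_mem (by omega) hj (by omega)]

lemma reflectExtension_add_left (i j : ℤ) :
    reflectExtension m n v (i + 2 * (m + 1)) j = reflectExtension m n v i j := by
  rw [reflectExtension, periodic_foldInto, reflectExtension]

lemma reflectExtension_add_right (i j : ℤ) :
    reflectExtension m n v i (j + 2 * (n + 1)) = reflectExtension m n v i j := by
  rw [reflectExtension, periodic_foldInto, reflectExtension]

lemma IsHarmonic.isPlaneHarmonic_reflectExtension (hm : 0 ≤ m) (hn : 0 ≤ n)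
    (hv : IsHarmonic m n v) : IsPlaneHarmonic (reflectExtension m n v) := by
  intro i j
  have hi := foldInto_neighbours (M := m + 1) (by omega) i
  have hj := foldInto_neighbours (M := n + 1) (by omega) j
  simp only [reflectExtension]
  rcases hi with ⟨hturn, heq⟩ | hi
  · have hline := hv.apply_eq_zero_of_left (a := foldInto (m + 1) i) (by omega)
    rw [heq, hline, hline, add_zero, add_zero, CharTwo.add_self_eq_zero]
  rcases hj with ⟨hturn, heq⟩ | hj
  · have hline : ∀ a, v a (foldInto (n + 1) j) = 0 :=
      fun a => hv.apply_eq_zero_of_right a (by omega)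
    rw [heq, hline, hline, zero_add, zero_add, CharTwo.add_self_eq_zero]
  have := foldInto_mem (M := m + 1) (by omega) (i - 1)
  have := foldInto_mem (M := m + 1) (by omega) (i + 1)
  have := foldInto_mem (M := n + 1) (by omega) (j - 1)
  have := foldInto_mem (M := n + 1) (by omega) (j + 1)
  have hgrid : InGrid m n (foldInto (m + 1) i) (foldInto (n + 1) j) := by unfold InGrid; omega
  rcases hi with ⟨h₁, h₂⟩ | ⟨h₁, h₂⟩ <;> rcases hj with ⟨h₃, h₄⟩ | ⟨h₃, h₄⟩ <;>
    rw [h₁, h₂, h₃, h₄] <;> linear_combination hv.2 _ _ hgrid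

lemma IsHarmonic.eq_zero_of_isCoprime_of_even (hm : 0 ≤ m) (hn : 0 ≤ n)
    (hv : IsHarmonic m n v) (hmn : IsCoprime (m + 1) (n + 1)) (hme : Even m) : v = 0 := by
  set W := reflectExtension m n v
  have hW : IsPlaneHarmonic W := hv.isPlaneHarmonic_reflectExtension hm hn
  have h2 : Periodic (diagIncrement W) 2 := by
    obtain ⟨x, y, hxy⟩ := hmn
    have := ((periodic_diagIncrement_of_left reflectExtension_add_left).int_mul x).add_period
      ((hW.periodic_diagIncrement_of_right reflectExtension_add_right).int_mul y)
    rwa [Int.cast_id, Int.cast_id,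
      show x * (2 * (m + 1)) + y * (2 * (n + 1)) = 2 by linear_combination 2 * hxy] at this
  have hline : ∀ {a : ℤ}, a = -1 ∨ a = m → ∀ b, W a b = 0 := by
    intro a ha b
    show v (foldInto (m + 1) a) (foldInto (n + 1) b) = 0
    rw [foldInto_of_mem (by omega) (by omega) (by omega)]
    exact hv.apply_eq_zero_of_left ha _
  have hinc : ∀ s, diagIncrement W s = 0 := by
    intro s
    have := hW.apply_add_add h2 (-1) (s + 1) (m + 1)
    rw [show -1 + (m + 1) = m by ring, hline (.inr rfl), hline (.inl rfl),
      ZMod.intCast_eq_one_iff_odd.mpr hme.add_one, show -1 + (s + 1) = s by ring] at this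
    linear_combination -this
  funext i j
  by_cases hij : InGrid m n i j
  · unfold InGrid at hij
    calc v i j = W i j :=
          (reflectExtension_of_mem hm hn (by omega) (by omega) (by omega) (by omega)).symm
      _ = W (-1 + (i + 1)) (j - i - 1 + (i + 1)) := by ring_nf
      _ = 0 := by rw [hW.apply_add_add h2, hline (.inl rfl), hinc, mul_zero, add_zero]
  · exact hv.1 i j hij

lemma IsHarmonic.eq_zero_of_isCoprime (hm : 0 ≤ m) (hn : 0 ≤ n) (hv : IsHarmonic m n v)
    (hmn : IsCoprime (m + 1) (n + 1)) : v = 0 := by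
  have : Even m ∨ Even n := by
    by_contra! h
    rw [Int.not_even_iff_odd, Int.not_even_iff_odd] at h
    have := Int.isUnit_iff.mp (hmn.isUnit_of_dvd' (even_iff_two_dvd.mp h.1.add_one)
      (even_iff_two_dvd.mp h.2.add_one))
    omega
  rcases this with hme | hne
  · exact hv.eq_zero_of_isCoprime_of_even hm hn hmn hme
  · funext i j
    exact congrFun (congrFun (hv.swap.eq_zero_of_isCoprime_of_even hn hm hmn.symm hne) j) i

end Extension

section Construction

variable {m n : ℤ}

lemma IsPlaneHarmonic.isHarmonic_restrict {W : ℤ → ℤ → ZMod 2} (hW : IsPlaneHarmonic W)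
    (hleft : ∀ j, W (-1) j = 0) (hright : ∀ j, W m j = 0) (hbot : ∀ i, W i (-1) = 0)
    (htop : ∀ i, W i n = 0) :
    IsHarmonic m n fun i j => if InGrid m n i j then W i j else 0 := by
  have hext : ∀ a b, -1 ≤ a → a ≤ m → -1 ≤ b → b ≤ n →
      (if InGrid m n a b then W a b else 0) = W a b := by
    intro a b ha ha' hb hb'
    split_ifs with h
    · rfl
    unfold InGrid at h
    rcases (by omega : a = -1 ∨ a = m ∨ b = -1 ∨ b = n) with rfl | rfl | rfl | rfl
    exacts [(hleft b).symm, (hright b).symm, (hbot a).symm, (htop a).symm]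
  refine ⟨fun i j h => if_neg h, fun i j h => ?_⟩
  unfold InGrid at h
  dsimp only
  rw [hext _ _ (by omega) (by omega) (by omega) (by omega),
    hext _ _ (by omega) (by omega) (by omega) (by omega),
    hext _ _ (by omega) (by omega) (by omega) (by omega),
    hext _ _ (by omega) (by omega) (by omega) (by omega)]
  exact hW i j

/-- The reflections in the four lines around the grid swap the two summands. -/
lemma isHarmonic_of_even_of_periodic {ψ : ℤ → ZMod 2} (hψ : ψ.Even)
    (hm : Periodic ψ (2 * (m + 1))) (hn : Periodic ψ (2 * (n + 1))) :
    IsHarmonic m n fun i j => if InGrid m n i j then ψ (i + j + 2) + ψ (i - j) else 0 := by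
  refine (isPlaneHarmonic_add_sub (fun s => ψ (s + 2)) ψ).isHarmonic_restrict ?_ ?_ ?_ ?_
  · intro j
    rw [← hψ (-1 - j), show -(-1 - j) = -1 + j + 2 by ring, CharTwo.add_self_eq_zero]
  · intro j
    rw [← hψ (m - j), show -(m - j) = m + j + 2 - 2 * (m + 1) by ring, hm.sub_eq,
      CharTwo.add_self_eq_zero]
  · intro i
    rw [show i - -1 = i + -1 + 2 by ring, CharTwo.add_self_eq_zero]
  · intro i
    rw [show i - n = i + n + 2 - 2 * (n + 1) by ring, hn.sub_eq, CharTwo.add_self_eq_zero]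

lemma exists_isHarmonic_ne_zero_of_dvd (hm : 1 ≤ m) (hn : 1 ≤ n) {d : ℤ} (hd : 2 ≤ d)
    (hdm : d ∣ m + 1) (hdn : d ∣ n + 1) : ∃ v, IsHarmonic m n v ∧ v ≠ 0 := by
  set ψ : ℤ → ZMod 2 := fun s => if 2 * d ∣ s then 1 else 0
  have hψ : ψ.Even := fun s => by simp only [ψ, dvd_neg]
  have hper : ∀ {k}, d ∣ k → Periodic ψ (2 * k) := fun hk s => by
    simp only [ψ, dvd_add_left (mul_dvd_mul_left 2 hk)]
  refine ⟨_, isHarmonic_of_even_of_periodic hψ (hper hdm) (hper hdn), fun h => ?_⟩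
  have h00 := congrFun (congrFun h 0) 0
  have h2 : ¬ 2 * d ∣ 2 := fun h => by have := Int.le_of_dvd two_pos h; omega
  have h0 : InGrid m n 0 0 := by unfold InGrid; omega
  simp [h0, ψ, h2] at h00

end Construction

/-- the only harmonic function on the m×n grid is zero if and
only if gcd(m+1, n+1) = 1. -/
theorem triviality_criterion (m n : ℤ) (hm : 2 ≤ m) (hn : 2 ≤ n) :
    (∀ v : ℤ → ℤ → ZMod 2, IsHarmonic m n v → v = 0) ↔
      Int.gcd (m + 1) (n + 1) = 1 := by
  rw [← Int.isCoprime_iff_gcd_eq_one]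
  refine ⟨fun htriv => ?_, fun hmn v hv => hv.eq_zero_of_isCoprime (by omega) (by omega) hmn⟩
  by_contra hmn
  have hgcd : 2 ≤ Int.gcd (m + 1) (n + 1) := by
    have := Int.gcd_pos_of_ne_zero_left (n + 1) (by omega : m + 1 ≠ 0)
    have := mt Int.isCoprime_iff_gcd_eq_one.mpr hmn
    omega
  obtain ⟨v, hv, hv0⟩ := exists_isHarmonic_ne_zero_of_dvd (m := m) (n := n) (by omega) (by omega)
    (by exact_mod_cast hgcd) (Int.gcd_dvd_left _ _) (Int.gcd_dvd_right _ _)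
  exact hv0 (htriv v hv)
end
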